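/- arXiv:1505.02932 — 2 statements merged into one kernel-verified Lean document; each statement's English description precedes it below -/
import Mathlib

section
/- Let k be an infinite field of prime characteristic p, G a group acting linearly and rationally on a finite-dimensional k-vector space V, and v ∈ V^G a fixed point. Define ε(G, v) to be the infimum of all positive integers m such that there exists a G-invariant homogeneous polynomial of degree m not vanishing at v (infimum of the empty set being ∞). Then ε(G, v) is either ∞ or a power of p (including p⁰ = 1). -/
/-!
Let `f` be a homogeneous invariant of minimal degree `m = p ^ r * d`, `p ∤ d`, with `f v ≠ 0`.
As `v` is fixed, the translate `F x = f (x + v)` is invariant, hence so is each homogeneous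
component of `F`. On the line through `v`, `F (t • v) = f ((1 + t) • v) = (1 + t) ^ m * f v`, so
the component of degree `p ^ r` takes the value `m.choose (p ^ r) * f v` at `v`, and by Lucas
`(p ^ r * d).choose (p ^ r) ≡ d ≢ 0 [MOD p]`. Thus `p ^ r ≤ m` is a separating degree as well.
-/

open MvPolynomial

/-- The action of a linear automorphism `A` of `V = Fin n → K` on `K[V]`:
`f ↦ f ∘ A⁻¹`. -/
noncomputable def polyAct {K : Type*} [Field K] {n : ℕ}
    (A : (Fin n → K) ≃ₗ[K] (Fin n → K)) (f : MvPolynomial (Fin n) K) :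
    MvPolynomial (Fin n) K :=
  aeval (fun i => ∑ j, C (A.symm (Pi.single j 1) i) * X j) f

theorem Nat.cast_choose_ordProj_ne_zero {p : ℕ} (hp : p.Prime) (K : Type*)
    [AddMonoidWithOne K] [CharP K p] {m : ℕ} (hm : m ≠ 0) :
    (m.choose (p ^ m.factorization p) : K) ≠ 0 := by
  have := Fact.mk hp
  have lucas := Choose.choose_pow_mul_pow_mul_modEq_choose_nat
    (k := m.factorization p) (a := m / p ^ m.factorization p) (b := 1) (p := p)
  rw [mul_one, Nat.ordProj_mul_ordCompl_eq_self, Nat.choose_one_right] at lucas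
  rw [Ne, CharP.cast_eq_zero_iff K p, lucas.dvd_iff dvd_rfl]
  exact Nat.not_dvd_ordCompl hp hm

namespace MvPolynomial

variable {R σ : Type*} [CommSemiring R]

theorem IsHomogeneous.aeval_algebraMap_mul {S : Type*} [CommSemiring S] [Algebra R S]
    {f : MvPolynomial σ R} {m : ℕ} (hf : f.IsHomogeneous m) (v : σ → R) (q : S) :
    MvPolynomial.aeval (fun i => algebraMap R S (v i) * q) f =
      algebraMap R S (eval v f) * q ^ m := by
  conv_lhs => rw [f.as_sum]
  conv_rhs => rw [f.as_sum]
  simp only [map_sum, Finset.sum_mul]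
  refine Finset.sum_congr rfl fun d hd => ?_
  have hdeg : ∑ i ∈ d.support, d i = m := by
    rw [← Finsupp.degree_apply, Finsupp.degree_eq_weight_one]; exact hf (mem_support_iff.mp hd)
  rw [aeval_monomial, eval_monomial, map_mul, map_finsuppProd]
  simp only [mul_pow, Finsupp.prod_mul, map_pow]
  rw [Finsupp.prod, Finsupp.prod, Finset.prod_pow_eq_pow_sum, hdeg, mul_assoc]

/-- `f (X + v)`, the multivariate analogue of `Polynomial.taylor`. -/
noncomputable def taylor (v : σ → R) : MvPolynomial σ R →ₐ[R] MvPolynomial σ R :=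
  aeval fun i => X i + C (v i)

theorem aeval_taylor {S : Type*} [CommSemiring S] [Algebra R S]
    (g : σ → S) (v : σ → R) (f : MvPolynomial σ R) :
    aeval g (taylor v f) = aeval (fun i => g i + algebraMap R S (v i)) f := by
  simp only [taylor, comp_aeval_apply, map_add, aeval_X, aeval_C]

theorem homogeneousComponent_aeval {τ : Type*} {g : σ → MvPolynomial τ R}
    (hg : ∀ i, (g i).IsHomogeneous 1) (k : ℕ) (F : MvPolynomial σ R) :
    homogeneousComponent k (aeval g F) = aeval g (homogeneousComponent k F) := by
  have hmem (i : ℕ) : aeval g (homogeneousComponent i F) ∈ homogeneousSubmodule τ R i := by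
    simpa using (homogeneousComponent_isHomogeneous i F).aeval g hg
  conv_lhs => rw [← sum_homogeneousComponent F]
  simp only [map_sum, homogeneousComponent_of_mem (hmem _), Finset.sum_ite_eq]
  split_ifs with hk
  · rfl
  · have : F.totalDegree < k := by simpa using hk
    rw [homogeneousComponent_eq_zero _ _ this, map_zero]

theorem coeff_aeval_C_mul_X (F : MvPolynomial σ R) (v : σ → R) (k : ℕ) :
    (aeval (fun i => Polynomial.C (v i) * Polynomial.X) F).coeff k =
      eval v (homogeneousComponent k F) := by
  have hcomp (i : ℕ) :
      aeval (fun i => Polynomial.C (v i) * Polynomial.X) (homogeneousComponent i F) =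
        Polynomial.C (eval v (homogeneousComponent i F)) * Polynomial.X ^ i :=
    (homogeneousComponent_isHomogeneous i F).aeval_algebraMap_mul v Polynomial.X
  conv_lhs => rw [← sum_homogeneousComponent F]
  simp only [map_sum, hcomp, Polynomial.finsetSum_coeff, Polynomial.coeff_C_mul_X_pow,
    Finset.sum_ite_eq]
  split_ifs with hk
  · rfl
  · have : F.totalDegree < k := by simpa using hk
    rw [homogeneousComponent_eq_zero _ _ this, map_zero]

theorem eval_homogeneousComponent_taylor {f : MvPolynomial σ R} {m : ℕ}
    (hf : f.IsHomogeneous m) (v : σ → R) (k : ℕ) :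
    eval v (homogeneousComponent k (taylor v f)) = m.choose k * eval v f := by
  rw [← coeff_aeval_C_mul_X, aeval_taylor]
  have hline := hf.aeval_algebraMap_mul v (Polynomial.X + 1 : Polynomial R)
  simp only [Polynomial.algebraMap_eq, ← mul_add_one] at hline ⊢
  rw [hline, Polynomial.coeff_C_mul, Polynomial.coeff_X_add_one_pow, mul_comm]

end MvPolynomial

section polyAct
variable {K : Type*} [Field K] {n : ℕ} (A : (Fin n → K) ≃ₗ[K] (Fin n → K))

theorem homogeneousComponent_polyAct (k : ℕ) (F : MvPolynomial (Fin n) K) :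
    homogeneousComponent k (polyAct A F) = polyAct A (homogeneousComponent k F) :=
  homogeneousComponent_aeval
    (fun _ => IsHomogeneous.sum _ _ _ fun j _ => (isHomogeneous_X K j).C_mul _) k F

theorem polyAct_taylor {v : Fin n → K} (hv : A v = v) (f : MvPolynomial (Fin n) K) :
    polyAct A (taylor v f) = taylor v (polyAct A f) := by
  have hcoord : ∀ i, ∑ j, A.symm (Pi.single j 1) i * v j = v i := fun i => by
    have := congrFun (LinearMap.toMatrix'_mulVec (A.symm : _ →ₗ[K] _) v) i
    simpa [Matrix.mulVec, dotProduct, A.symm_apply_eq.mpr hv.symm] using this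
  simp only [polyAct, taylor, comp_aeval_apply]
  refine congrArg (aeval · f) (funext fun i => ?_)
  rw [map_add, aeval_X, aeval_C, algebraMap_eq, map_sum]
  simp only [map_mul, aeval_C, aeval_X, algebraMap_eq, mul_add, Finset.sum_add_distrib]
  rw [← hcoord i, map_sum]
  simp only [map_mul]

end polyAct

theorem stmt14_general (p : ℕ) (hp : p.Prime) (K : Type*) [Field K] [CharP K p]
    (n : ℕ) (G : Type*) [Group G] (ρ : G →* ((Fin n → K) ≃ₗ[K] (Fin n → K)))
    (v : Fin n → K) (hfix : ∀ g, ρ g v = v)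
    (S : Set ℕ)
    (hS : S = {m : ℕ | 0 < m ∧ ∃ f : MvPolynomial (Fin n) K,
      f.IsHomogeneous m ∧ (∀ g, polyAct (ρ g) f = f) ∧ eval v f ≠ 0}) :
    S = ∅ ∨ ∃ s : ℕ, sInf S = p ^ s := by
  refine or_iff_not_imp_left.mpr fun hSe => ?_
  have hmem : sInf S ∈ S := Nat.sInf_mem (Set.nonempty_iff_ne_empty.mpr hSe)
  set m := sInf S
  rw [hS] at hmem
  obtain ⟨hm0, f, hf, hfinv, hfv⟩ := hmem
  have hpow : p ^ m.factorization p ∈ S := by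
    rw [hS]
    refine ⟨pow_pos hp.pos _, homogeneousComponent (p ^ m.factorization p) (taylor v f),
      homogeneousComponent_isHomogeneous _ _, fun g => ?_, ?_⟩
    · rw [← homogeneousComponent_polyAct, polyAct_taylor _ (hfix g), hfinv g]
    · rw [eval_homogeneousComponent_taylor hf]
      exact mul_ne_zero (Nat.cast_choose_ordProj_ne_zero hp K hm0.ne') hfv
  exact ⟨_, le_antisymm (Nat.sInf_le hpow) (Nat.ordProj_le p hm0.ne')⟩

/-- For a fixed point `v ∈ V^G`, the minimal positive degree of a homogeneous
invariant not vanishing at `v` is a power of `p` (possibly `p⁰ = 1`), unless no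
such invariant exists at all. -/
theorem stmt14 (p : ℕ) (hp : p.Prime) (K : Type*) [Field K] [CharP K p] [Infinite K]
    (n : ℕ) (G : Type*) [Group G] (ρ : G →* ((Fin n → K) ≃ₗ[K] (Fin n → K)))
    (v : Fin n → K) (hfix : ∀ g, ρ g v = v)
    (S : Set ℕ)
    (hS : S = {m : ℕ | 0 < m ∧ ∃ f : MvPolynomial (Fin n) K,
      f.IsHomogeneous m ∧ (∀ g, polyAct (ρ g) f = f) ∧ eval v f ≠ 0}) :
    S = ∅ ∨ ∃ s : ℕ, sInf S = p ^ s :=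
  stmt14_general p hp K n G ρ v hfix S hS
end

section
/- Let k be a field of prime characteristic p, and let G be a group acting k-linearly on k[x₀,…,xₙ] by graded algebra automorphisms such that each g ∈ G fixes the subspace spanned by x₁,…,xₙ setwise and sends x₀ to x₀ + γ(g) with γ(g) a linear form in x₁,…,xₙ. Let r ≥ 0, let d ≥ 1 be coprime to p, and let T ⊆ k[x₀,…,xₙ]_{p^r d} be the span of monomials of degree at least p^r + 1 in x₁,…,xₙ. Then the k-linear map φ : k[x₀,…,xₙ]_{p^r d}/T → k[x₀,…,xₙ]_{p^r} defined by x₀^{p^r d} + T ↦ x₀^{p^r} and x₀^{p^r d − k}·b + T ↦ (1/d)·x₀^{p^r − k}·b (for b ∈ k[x₁,…,xₙ]_k, 1 ≤ k ≤ p^r) is G-equivariant. -/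
open MvPolynomial

/-- The subspace `T`: span of the monomials of total degree `p^r·d` whose total
degree in the variables `x₁,…,xₙ` is at least `p^r + 1`. -/
noncomputable def Tsub (K : Type*) [Field K] (n p r d : ℕ) :
    Submodule K (MvPolynomial (Fin (n + 1)) K) :=
  Submodule.span K {f | ∃ m : Fin (n + 1) →₀ ℕ,
    (∑ i, m i) = p ^ r * d ∧ p ^ r + 1 ≤ (∑ i, m i) - m 0 ∧ f = monomial m (1 : K)}

/-- The span of the variables `x₁,…,xₙ` (the linear forms vanishing on `v₀`). -/
noncomputable def spanX' (K : Type*) [Field K] (n : ℕ) :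
    Submodule K (MvPolynomial (Fin (n + 1)) K) :=
  Submodule.span K (Set.range fun i : {i : Fin (n + 1) // i ≠ 0} =>
    (X i.1 : MvPolynomial (Fin (n + 1)) K))

/-! ### Auxiliary lemmas -/

section Lucas

lemma aux_lucas_pow (p : ℕ) (hp : p.Prime) (r : ℕ) :
    ∀ a B c D : ℕ, B < p ^ r → D < p ^ r →
      ((a * p ^ r + B).choose (c * p ^ r + D) : ZMod p)
        = (a.choose c : ZMod p) * (B.choose D : ZMod p) := by
  haveI : Fact p.Prime := ⟨hp⟩
  have hp0 : 0 < p := hp.pos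
  have cast_eq : ∀ n k : ℕ, ((n.choose k : ZMod p))
      = ((n % p).choose (k % p) : ZMod p) * ((n / p).choose (k / p) : ZMod p) := by
    intro n k
    have := (ZMod.intCast_eq_intCast_iff' _ _ _).mpr
      (Choose.choose_modEq_choose_mod_mul_choose_div (p := p) (n := n) (k := k))
    push_cast at this
    exact_mod_cast this
  induction r with
  | zero =>
      intro a B c D hB hD
      simp only [pow_zero, Nat.lt_one_iff] at hB hD
      subst hB; subst hD
      simp
  | succ r ih =>
      intro a B c D hB hD
      have hmod : ∀ x y : ℕ, (x * p ^ (r + 1) + y) % p = y % p := by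
        intro x y
        have h0 : x * p ^ (r + 1) % p = 0 := by
          rw [show x * p ^ (r + 1) = x * p ^ r * p by ring]
          exact Nat.mul_mod_left _ _
        rw [Nat.add_mod, h0, Nat.zero_add, Nat.mod_mod_of_dvd y (dvd_refl p)]
      have hdiv : ∀ x y : ℕ, (x * p ^ (r + 1) + y) / p = x * p ^ r + y / p := by
        intro x y
        rw [show x * p ^ (r + 1) + y = y + x * p ^ r * p by ring,
          Nat.add_mul_div_right _ _ hp0, Nat.add_comm]
      have hBd : B / p < p ^ r := Nat.div_lt_of_lt_mul (by rw [pow_succ'] at hB; exact hB)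
      have hDd : D / p < p ^ r := Nat.div_lt_of_lt_mul (by rw [pow_succ'] at hD; exact hD)
      rw [cast_eq (a * p ^ (r + 1) + B) (c * p ^ (r + 1) + D), hmod a B, hmod c D,
        hdiv a B, hdiv c D, ih a (B / p) c (D / p) hBd hDd, cast_eq B D]
      ring

lemma aux_choose_cast_eq (p : ℕ) (hp : p.Prime) (K : Type*) [AddGroupWithOne K] [CharP K p]
    (r a B c D : ℕ) (hB : B < p ^ r) (hD : D < p ^ r) :
    ((a * p ^ r + B).choose (c * p ^ r + D) : K) = ((a.choose c * B.choose D : ℕ) : K) := by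
  apply CharP.natCast_eq_natCast' K p
  rw [← ZMod.natCast_eq_natCast_iff]
  push_cast
  exact aux_lucas_pow p hp r a B c D hB hD

lemma aux_choose_sub_cast (p : ℕ) (hp : p.Prime) (K : Type*) [AddGroupWithOne K] [CharP K p]
    (r d k j : ℕ) (hd : 1 ≤ d) (hk1 : 1 ≤ k) (hkq : k ≤ p ^ r) (hj : j ≤ p ^ r - k) :
    ((p ^ r * d - k).choose j : K) = (((p ^ r - k).choose j : ℕ) : K) := by
  have hq1 : 1 ≤ p ^ r := Nat.one_le_pow _ _ hp.pos
  obtain ⟨d', rfl⟩ := Nat.exists_eq_add_of_le hd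
  have hmul : p ^ r * (1 + d') = p ^ r + d' * p ^ r := by ring
  have e1 : p ^ r * (1 + d') - k = d' * p ^ r + (p ^ r - k) := by omega
  have := aux_choose_cast_eq p hp K r d' (p ^ r - k) 0 j (by omega) (by omega)
  rw [zero_mul, zero_add] at this
  rw [e1, this, Nat.choose_zero_right, one_mul]

lemma aux_choose_qd_cast (p : ℕ) (hp : p.Prime) (K : Type*) [AddGroupWithOne K] [CharP K p]
    (r d j : ℕ) (hj1 : 1 ≤ j) (hjq : j < p ^ r) :
    ((p ^ r * d).choose j : K) = 0 := by
  have hq1 : 0 < p ^ r := pow_pos hp.pos r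
  have := aux_choose_cast_eq p hp K r d 0 0 j hq1 hjq
  rw [zero_mul, zero_add, add_zero, mul_comm d] at this
  rw [this, Nat.choose_eq_zero_of_lt hj1, Nat.mul_zero, Nat.cast_zero]

lemma aux_choose_qd_q_cast (p : ℕ) (hp : p.Prime) (K : Type*) [AddGroupWithOne K] [CharP K p]
    (r d : ℕ) : ((p ^ r * d).choose (p ^ r) : K) = (d : K) := by
  have hq1 : 0 < p ^ r := pow_pos hp.pos r
  have := aux_choose_cast_eq p hp K r d 0 1 0 hq1 hq1
  rw [add_zero, add_zero, one_mul, mul_comm d] at this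
  rw [this, Nat.choose_one_right, Nat.choose_self, mul_one]

end Lucas

section PolyAux

variable {K : Type*} [Field K] {n : ℕ}

lemma aux_sum_univ_eq_degree (m : Fin (n + 1) →₀ ℕ) : (∑ i, m i) = m.degree :=
  (Finset.sum_subset (Finset.subset_univ _)
    (fun _ _ hi => Finsupp.notMem_support_iff.mp hi)).symm

lemma aux_degree_of_homog {N : ℕ} {f : MvPolynomial (Fin (n + 1)) K}
    (hf : f.IsHomogeneous N) {μ : Fin (n + 1) →₀ ℕ} (hμ : μ ∈ f.support) :
    (∑ i, μ i) = N := by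
  rw [aux_sum_univ_eq_degree, Finsupp.degree_eq_weight_one]
  exact hf (Finsupp.mem_support_iff.mp hμ)

lemma aux_homog_mem_span (N : ℕ) (f : MvPolynomial (Fin (n + 1)) K) (hf : f.IsHomogeneous N) :
    f ∈ Submodule.span K {h : MvPolynomial (Fin (n + 1)) K |
      ∃ m : Fin (n + 1) →₀ ℕ, (∑ i, m i) = N ∧ h = monomial m 1} := by
  nth_rewrite 1 [f.as_sum]
  refine Submodule.sum_mem _ fun m hm => ?_
  have : monomial m (coeff m f) = (coeff m f) • monomial m (1 : K) := by
    rw [smul_monomial, smul_eq_mul, mul_one]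
  rw [this]
  exact Submodule.smul_mem _ _
    (Submodule.subset_span ⟨m, aux_degree_of_homog hf hm, rfl⟩)

lemma aux_spanX'_homog {γ : MvPolynomial (Fin (n + 1)) K} (h : γ ∈ spanX' K n) :
    γ.IsHomogeneous 1 := by
  have hle : spanX' K n ≤ homogeneousSubmodule (Fin (n + 1)) K 1 := by
    rw [spanX', Submodule.span_le]
    rintro _ ⟨i, rfl⟩
    exact isHomogeneous_X K i.1
  exact hle h

lemma aux_spanX'_noX0 {γ : MvPolynomial (Fin (n + 1)) K} (h : γ ∈ spanX' K n) :
    degreeOf 0 γ = 0 := by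
  rw [spanX'] at h
  induction h using Submodule.span_induction with
  | mem x hx =>
      obtain ⟨i, rfl⟩ := hx
      rw [degreeOf_X, if_neg (fun hc => i.2 hc.symm)]
  | zero => exact degreeOf_zero 0
  | add x y hx hy ihx ihy =>
      have := degreeOf_add_le (0 : Fin (n + 1)) x y
      omega
  | smul a x hx ih =>
      rw [smul_eq_C_mul]
      have := degreeOf_C_mul_le x 0 a
      omega

lemma aux_mem_Tsub {p r d : ℕ} {f : MvPolynomial (Fin (n + 1)) K}
    (hf : f.IsHomogeneous (p ^ r * d))
    (h : ∀ μ ∈ f.support, p ^ r + 1 ≤ p ^ r * d - μ 0) : f ∈ Tsub K n p r d := by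
  nth_rewrite 1 [f.as_sum]
  refine Submodule.sum_mem _ fun μ hμ => ?_
  have hdeg : (∑ i, μ i) = p ^ r * d := aux_degree_of_homog hf hμ
  have : monomial μ (coeff μ f) = (coeff μ f) • monomial μ (1 : K) := by
    rw [smul_monomial, smul_eq_mul, mul_one]
  rw [this]
  refine Submodule.smul_mem _ _ (Submodule.subset_span ⟨μ, hdeg, ?_, rfl⟩)
  rw [hdeg]
  exact h μ hμ

/-- Auxiliary family used to decompose elements of the degree-`p^r d` component. -/
noncomputable def Wfun {K : Type*} [Field K] {n N : ℕ} (m0 : ℕ)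
    (w : ℕ → MvPolynomial (Fin (n + 1)) K)
    (hmem : ∀ j, j ≤ m0 → w j ∈ homogeneousSubmodule (Fin (n + 1)) K N) (j : ℕ) :
    homogeneousSubmodule (Fin (n + 1)) K N :=
  if h : j ≤ m0 then ⟨w j, hmem j h⟩ else 0

lemma Wfun_coe {K : Type*} [Field K] {n N : ℕ} (m0 : ℕ)
    (w : ℕ → MvPolynomial (Fin (n + 1)) K)
    (hmem : ∀ j, j ≤ m0 → w j ∈ homogeneousSubmodule (Fin (n + 1)) K N) {j : ℕ}
    (h : j ≤ m0) : (Wfun m0 w hmem j : MvPolynomial (Fin (n + 1)) K) = w j := by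
  rw [Wfun, dif_pos h]

end PolyAux

/-- The degree-reduction map `φ : k[x₀,…,xₙ]_{p^r d}/T → k[x₀,…,xₙ]_{p^r}`
(here realized as a map `ψ` on the degree-`p^r d` component with kernel `T`)
is `G`-equivariant. -/
theorem stmt19 (p : ℕ) (hp : p.Prime) (K : Type*) [Field K] [CharP K p]
    (r d n : ℕ) (hd : 1 ≤ d) (hpd : Nat.Coprime d p)
    (G : Type*) [Group G]
    (ρ : G →* (MvPolynomial (Fin (n + 1)) K ≃ₐ[K] MvPolynomial (Fin (n + 1)) K))
    (hgrade : ∀ (g : G) (m : ℕ), ∀ f ∈ homogeneousSubmodule (Fin (n + 1)) K m,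
      ρ g f ∈ homogeneousSubmodule (Fin (n + 1)) K m)
    (hspan : ∀ (g : G), ∀ f ∈ spanX' K n, ρ g f ∈ spanX' K n)
    (hx0 : ∀ g : G, ∃ γ ∈ spanX' K n, ρ g (X 0) = X 0 + γ)
    (ψ : homogeneousSubmodule (Fin (n + 1)) K (p ^ r * d) →ₗ[K] MvPolynomial (Fin (n + 1)) K)
    (hrange : LinearMap.range ψ = homogeneousSubmodule (Fin (n + 1)) K (p ^ r))
    (hker : LinearMap.ker ψ =
      Submodule.comap (homogeneousSubmodule (Fin (n + 1)) K (p ^ r * d)).subtype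
        (Tsub K n p r d))
    (hone : ∀ f : homogeneousSubmodule (Fin (n + 1)) K (p ^ r * d),
      (f : MvPolynomial (Fin (n + 1)) K) = X 0 ^ (p ^ r * d) → ψ f = X 0 ^ (p ^ r))
    (hmon : ∀ k : ℕ, 1 ≤ k → k ≤ p ^ r →
      ∀ b : MvPolynomial (Fin (n + 1)) K, b.IsHomogeneous k → (∀ m ∈ b.support, m 0 = 0) →
        ∀ f : homogeneousSubmodule (Fin (n + 1)) K (p ^ r * d),
          (f : MvPolynomial (Fin (n + 1)) K) = X 0 ^ (p ^ r * d - k) * b →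
          ψ f = (d : K)⁻¹ • (X 0 ^ (p ^ r - k) * b)) :
    ∀ (g : G) (f f' : homogeneousSubmodule (Fin (n + 1)) K (p ^ r * d)),
      (f' : MvPolynomial (Fin (n + 1)) K) = ρ g (f : MvPolynomial (Fin (n + 1)) K) →
      ψ f' = ρ g (ψ f) := by
  intro g f f' hf'
  haveI : Fact p.Prime := ⟨hp⟩
  have hq1 : 1 ≤ p ^ r := Nat.one_le_pow _ _ hp.pos
  have hqN : p ^ r ≤ p ^ r * d := by
    calc p ^ r = p ^ r * 1 := (mul_one _).symm
    _ ≤ p ^ r * d := Nat.mul_le_mul_left _ hd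
  have hdK : (d : K) ≠ 0 := by
    rw [Ne, CharP.cast_eq_zero_iff K p]
    exact (Nat.Prime.coprime_iff_not_dvd hp).mp hpd.symm
  have psi_zero : ∀ (v : MvPolynomial (Fin (n + 1)) K)
      (hv : v ∈ homogeneousSubmodule (Fin (n + 1)) K (p ^ r * d)),
      v ∈ Tsub K n p r d → ψ ⟨v, hv⟩ = 0 := by
    intro v hv hT
    have hmem : (⟨v, hv⟩ : homogeneousSubmodule (Fin (n + 1)) K (p ^ r * d))
        ∈ LinearMap.ker ψ := by
      rw [hker]
      exact Submodule.mem_comap.mpr (by simpa using hT)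
    exact LinearMap.mem_ker.mp hmem
  obtain ⟨γ, hγs, hγ⟩ := hx0 g
  have hγ1 : γ.IsHomogeneous 1 := aux_spanX'_homog hγs
  have hγ0 : degreeOf 0 γ = 0 := aux_spanX'_noX0 hγs
  have hρ_noX0 : ∀ m' : Fin (n + 1) →₀ ℕ, m' 0 = 0 →
      degreeOf 0 (ρ g (monomial m' (1 : K))) = 0 := by
    intro m' hm'
    rw [monomial_eq, C_1, one_mul, Finsupp.prod, map_prod]
    have hbound := degreeOf_prod_le (0 : Fin (n + 1)) m'.support
      (fun i => (ρ g) (X i ^ m' i))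
    have hzero : ∀ i ∈ m'.support, degreeOf 0 ((ρ g) (X i ^ m' i)) = 0 := by
      intro i hi
      have hi0 : i ≠ 0 := by
        rintro rfl
        exact (Finsupp.mem_support_iff.mp hi) hm'
      rw [map_pow]
      have h1 := degreeOf_pow_le (0 : Fin (n + 1)) (ρ g (X i)) (m' i)
      have h2 : degreeOf 0 (ρ g (X i)) = 0 :=
        aux_spanX'_noX0 (hspan g _ (Submodule.subset_span ⟨⟨i, hi0⟩, rfl⟩))
      rw [h2, Nat.mul_zero] at h1
      omega
    have hsum0 : (∑ i ∈ m'.support, degreeOf 0 ((ρ g) (X i ^ m' i))) = 0 :=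
      Finset.sum_eq_zero hzero
    omega
  have hSle : Submodule.span K {h : MvPolynomial (Fin (n + 1)) K |
      ∃ m : Fin (n + 1) →₀ ℕ, (∑ i, m i) = p ^ r * d ∧ h = monomial m 1}
      ≤ homogeneousSubmodule (Fin (n + 1)) K (p ^ r * d) := by
    rw [Submodule.span_le]
    rintro _ ⟨m, hm, rfl⟩
    exact isHomogeneous_monomial 1 (by rw [← aux_sum_univ_eq_degree]; exact hm)
  have main : ∀ x : MvPolynomial (Fin (n + 1)) K,
      x ∈ Submodule.span K {h : MvPolynomial (Fin (n + 1)) K |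
        ∃ m : Fin (n + 1) →₀ ℕ, (∑ i, m i) = p ^ r * d ∧ h = monomial m 1} →
      ∀ (hh : x ∈ homogeneousSubmodule (Fin (n + 1)) K (p ^ r * d))
        (hh' : ρ g x ∈ homogeneousSubmodule (Fin (n + 1)) K (p ^ r * d)),
        ψ ⟨ρ g x, hh'⟩ = ρ g (ψ ⟨x, hh⟩) := by
    intro x hxspan
    induction hxspan using Submodule.span_induction with
    | zero =>
        intro hh hh'
        have e1 : (⟨ρ g (0 : MvPolynomial (Fin (n + 1)) K), hh'⟩ :
            homogeneousSubmodule (Fin (n + 1)) K (p ^ r * d)) = 0 := Subtype.ext (map_zero _)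
        have e2 : (⟨(0 : MvPolynomial (Fin (n + 1)) K), hh⟩ :
            homogeneousSubmodule (Fin (n + 1)) K (p ^ r * d)) = 0 := Subtype.ext rfl
        rw [e1, e2]; simp
    | add x y hxs hys ihx ihy =>
        intro hh hh'
        have hxh := hSle hxs
        have hyh := hSle hys
        have hxh' := hgrade g _ _ hxh
        have hyh' := hgrade g _ _ hyh
        have e1 : (⟨ρ g (x + y), hh'⟩ :
            homogeneousSubmodule (Fin (n + 1)) K (p ^ r * d))
            = ⟨ρ g x, hxh'⟩ + ⟨ρ g y, hyh'⟩ := Subtype.ext (map_add _ _ _)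
        have e2 : (⟨x + y, hh⟩ : homogeneousSubmodule (Fin (n + 1)) K (p ^ r * d))
            = ⟨x, hxh⟩ + ⟨y, hyh⟩ := Subtype.ext rfl
        rw [e1, e2, map_add, map_add, ihx hxh hxh', ihy hyh hyh', map_add]
    | smul a x hxs ihx =>
        intro hh hh'
        have hxh := hSle hxs
        have hxh' := hgrade g _ _ hxh
        have e1 : (⟨ρ g (a • x), hh'⟩ :
            homogeneousSubmodule (Fin (n + 1)) K (p ^ r * d)) = a • ⟨ρ g x, hxh'⟩ :=
          Subtype.ext (map_smul _ _ _)
        have e2 : (⟨a • x, hh⟩ : homogeneousSubmodule (Fin (n + 1)) K (p ^ r * d))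
            = a • ⟨x, hxh⟩ := Subtype.ext rfl
        rw [e1, e2, map_smul, map_smul, ihx hxh hxh', map_smul]
    | mem x hx =>
        obtain ⟨m, hm, rfl⟩ := hx
        intro hh hh'
        classical
        set b : MvPolynomial (Fin (n + 1)) K := monomial (m.erase 0) 1 with hbdef
        set k : ℕ := (m.erase 0).degree with hkdef
        have hsplit : monomial m (1 : K) = X 0 ^ (m 0) * b := by
          rw [hbdef, X_pow_eq_monomial, monomial_mul, one_mul, Finsupp.single_add_erase]
        have hsum_erase : m 0 + k = p ^ r * d := by
          have h1 : (∑ i, (m.erase 0) i) = ∑ i ∈ Finset.univ.erase 0, m i := by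
            rw [← Finset.add_sum_erase _ _ (Finset.mem_univ (0 : Fin (n + 1))),
              Finsupp.erase_same, zero_add]
            exact Finset.sum_congr rfl fun i hi => Finsupp.erase_ne (Finset.ne_of_mem_erase hi)
          have h2 : m 0 + ∑ i ∈ Finset.univ.erase 0, m i = ∑ i, m i :=
            Finset.add_sum_erase _ _ (Finset.mem_univ (0 : Fin (n + 1)))
          rw [hkdef, ← aux_sum_univ_eq_degree, h1]
          omega
        have hb1 : b.IsHomogeneous k := isHomogeneous_monomial 1 hkdef.symm
        have hb0 : ∀ μ ∈ b.support, μ 0 = 0 := by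
          intro μ hμ
          rw [hbdef, support_monomial, if_neg one_ne_zero, Finset.mem_singleton] at hμ
          rw [hμ, Finsupp.erase_same]
        set c : MvPolynomial (Fin (n + 1)) K := ρ g b with hcdef
        have hc_hom : c.IsHomogeneous k := hgrade g k b hb1
        have hc0 : degreeOf 0 c = 0 := by
          rw [hcdef, hbdef]
          exact hρ_noX0 _ (Finsupp.erase_same)
        have hγc0 : ∀ j : ℕ, degreeOf 0 (γ ^ j * c) = 0 := by
          intro j
          have h1 := degreeOf_mul_le (0 : Fin (n + 1)) (γ ^ j) c
          have h2 := degreeOf_pow_le (0 : Fin (n + 1)) γ j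
          rw [hγ0, Nat.mul_zero] at h2
          omega
        have hρx : ρ g (monomial m (1 : K)) = (X 0 + γ) ^ (m 0) * c := by
          rw [hsplit, map_mul, map_pow, hγ, hcdef]
        by_cases hkbig : p ^ r + 1 ≤ k
        · -- Case A : the monomial lies in `T`, and so does its image.
          have hRzero : ψ ⟨monomial m (1 : K), hh⟩ = 0 := by
            apply psi_zero
            exact Submodule.subset_span ⟨m, hm, by rw [hm]; omega, rfl⟩
          have hLzero : ψ ⟨ρ g (monomial m (1 : K)), hh'⟩ = 0 := by
            apply psi_zero
            rw [hρx]
            apply aux_mem_Tsub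
            · rw [← hρx]
              exact hh'
            · intro μ hμ
              have hμ0 : μ 0 ≤ m 0 := by
                refine le_trans (monomial_le_degreeOf 0 hμ) ?_
                have h1 := degreeOf_mul_le (0 : Fin (n + 1)) ((X 0 + γ) ^ m 0) c
                have h2 := degreeOf_pow_le (0 : Fin (n + 1)) (X 0 + γ) (m 0)
                have h3 := degreeOf_add_le (0 : Fin (n + 1)) (X 0) γ
                rw [degreeOf_X, if_pos rfl, hγ0] at h3
                have h4 : degreeOf (0 : Fin (n + 1)) (X 0 + γ) ≤ 1 := by simpa using h3
                have h5 : m 0 * degreeOf (0 : Fin (n + 1)) (X 0 + γ) ≤ m 0 * 1 :=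
                  Nat.mul_le_mul_left _ h4
                omega
              omega
          rw [hLzero, hRzero, map_zero]
        · -- Case B/C : total degree in `x₁,…,xₙ` is at most `p^r`.
          have hkq : k ≤ p ^ r := by omega
          have hm0 : m 0 = p ^ r * d - k := by omega
          have hwmem : ∀ j, j ≤ m 0 →
              X 0 ^ (m 0 - j) * (γ ^ j * c)
                ∈ homogeneousSubmodule (Fin (n + 1)) K (p ^ r * d) := by
            intro j hj
            have hhom := (isHomogeneous_X_pow (R := K) (0 : Fin (n + 1)) (m 0 - j)).mul
              ((hγ1.pow j).mul hc_hom)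
            rw [mem_homogeneousSubmodule]
            rw [show m 0 - j + (1 * j + k) = p ^ r * d by omega] at hhom
            exact hhom
          set W : ℕ → homogeneousSubmodule (Fin (n + 1)) K (p ^ r * d) :=
            Wfun (m 0) (fun j => X 0 ^ (m 0 - j) * (γ ^ j * c)) hwmem with hWdef
          have hWcoe : ∀ {j : ℕ}, j ≤ m 0 →
              (W j : MvPolynomial (Fin (n + 1)) K) = X 0 ^ (m 0 - j) * (γ ^ j * c) :=
            fun {j} h => Wfun_coe _ _ _ h
          have cast_smul_eq : ∀ (t : ℕ) (z : MvPolynomial (Fin (n + 1)) K),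
              (t : K) • z = (t : MvPolynomial (Fin (n + 1)) K) * z := by
            intro t z
            rw [smul_eq_C_mul, map_natCast (C : K →+* MvPolynomial (Fin (n + 1)) K)]
          have hρx2 : ρ g (monomial m (1 : K))
              = ∑ j ∈ Finset.range (m 0 + 1),
                  ((m 0).choose j : K) • (X 0 ^ (m 0 - j) * (γ ^ j * c)) := by
            rw [hρx, show X 0 + γ = γ + X 0 from add_comm _ _, add_pow, Finset.sum_mul]
            refine Finset.sum_congr rfl fun j hj => ?_
            rw [cast_smul_eq]
            ring
          have hsum : (⟨ρ g (monomial m (1 : K)), hh'⟩ :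
              homogeneousSubmodule (Fin (n + 1)) K (p ^ r * d))
              = ∑ j ∈ Finset.range (m 0 + 1), ((m 0).choose j : K) • W j := by
            apply Subtype.ext
            show ρ g (monomial m (1 : K)) = _
            rw [hρx2, AddSubmonoidClass.coe_finset_sum]
            refine Finset.sum_congr rfl fun j hj => ?_
            rw [Finset.mem_range] at hj
            rw [SetLike.val_smul, hWcoe (by omega)]
          have hLHS1 : ψ ⟨ρ g (monomial m (1 : K)), hh'⟩
              = ∑ j ∈ Finset.range (m 0 + 1), ((m 0).choose j : K) • ψ (W j) := by
            rw [hsum, map_sum]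
            exact Finset.sum_congr rfl fun j _ => map_smul ψ _ _
          have hWzero : ∀ j : ℕ, j ≤ m 0 → p ^ r - k + 1 ≤ j → ψ (W j) = 0 := by
            intro j hj hjbig
            have hWeq : W j = ⟨X 0 ^ (m 0 - j) * (γ ^ j * c), hwmem j hj⟩ :=
              Subtype.ext (hWcoe hj)
            rw [hWeq]
            apply psi_zero
            apply aux_mem_Tsub (K := K) (n := n) (p := p) (r := r) (d := d) (hwmem j hj)
            intro μ hμ
            have hμ0 : μ 0 ≤ m 0 - j := by
              refine le_trans (monomial_le_degreeOf 0 hμ) ?_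
              have h1 := degreeOf_mul_le (0 : Fin (n + 1)) (X 0 ^ (m 0 - j)) (γ ^ j * c)
              have h2 := degreeOf_pow_le (0 : Fin (n + 1)) (X 0 : MvPolynomial (Fin (n + 1)) K) (m 0 - j)
              rw [degreeOf_X, if_pos rfl, Nat.mul_one] at h2
              have h3 := hγc0 j
              omega
            omega
          have hLHS2 : ψ ⟨ρ g (monomial m (1 : K)), hh'⟩
              = ∑ j ∈ Finset.range (p ^ r - k + 1), ((m 0).choose j : K) • ψ (W j) := by
            rw [hLHS1]
            refine (Finset.sum_subset (Finset.range_subset_range.mpr (by omega)) ?_).symm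
            intro j hjm hjs
            rw [Finset.mem_range] at hjm
            rw [Finset.mem_range, not_lt] at hjs
            rw [hWzero j (by omega) (by omega), smul_zero]
          by_cases hk0 : k = 0
          · -- Case B : `x = x₀^{p^r d}`.
            have herase : m.erase 0 = 0 := (Finsupp.degree_eq_zero_iff _).mp (by omega)
            have hb_one : b = 1 := by rw [hbdef, herase, monomial_zero', C_1]
            have hc_one : c = 1 := by rw [hcdef, hb_one, map_one]
            have hm0N : m 0 = p ^ r * d := by omega
            have hxcoe : (monomial m (1 : K)) = X 0 ^ (p ^ r * d) := by
              rw [hsplit, hb_one, mul_one, hm0N]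
            have hR1 : ψ ⟨monomial m (1 : K), hh⟩ = X 0 ^ (p ^ r) := hone _ hxcoe
            have hR2 : ρ g (ψ ⟨monomial m (1 : K), hh⟩)
                = X 0 ^ (p ^ r) + γ ^ (p ^ r) := by
              rw [hR1, map_pow, hγ, add_pow_char_pow]
            have hq0 : (0 : ℕ) ≠ p ^ r := by omega
            have hLHS3 : ψ ⟨ρ g (monomial m (1 : K)), hh'⟩
                = ∑ j ∈ ({0, p ^ r} : Finset ℕ), ((m 0).choose j : K) • ψ (W j) := by
              rw [hLHS2]
              refine (Finset.sum_subset ?_ ?_).symm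
              · intro j hj
                simp only [Finset.mem_insert, Finset.mem_singleton] at hj
                rw [Finset.mem_range]
                omega
              · intro j hjr hjns
                simp only [Finset.mem_insert, Finset.mem_singleton, not_or] at hjns
                rw [Finset.mem_range] at hjr
                rw [hm0N, aux_choose_qd_cast p hp K r d j (by omega) (by omega), zero_smul]
            have hW0 : ψ (W 0) = X 0 ^ (p ^ r) := by
              have hWeq : W 0 = ⟨X 0 ^ (m 0 - 0) * (γ ^ 0 * c), hwmem 0 (Nat.zero_le _)⟩ :=
                Subtype.ext (hWcoe (Nat.zero_le _))
              rw [hWeq]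
              apply hone
              show X 0 ^ (m 0 - 0) * (γ ^ 0 * c) = X 0 ^ (p ^ r * d)
              rw [hc_one, pow_zero, one_mul, mul_one, Nat.sub_zero, hm0N]
            have hWq : ψ (W (p ^ r)) = (d : K)⁻¹ • (γ ^ (p ^ r)) := by
              have hqm : p ^ r ≤ m 0 := by omega
              have hWeq : W (p ^ r) = ⟨X 0 ^ (m 0 - p ^ r) * (γ ^ (p ^ r) * c),
                  hwmem _ hqm⟩ := Subtype.ext (hWcoe hqm)
              have hhomq : (γ ^ (p ^ r) * c).IsHomogeneous (p ^ r) := by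
                have := (hγ1.pow (p ^ r)).mul hc_hom
                rw [show 1 * p ^ r + k = p ^ r by omega] at this
                exact this
              have hsuppq : ∀ μ ∈ (γ ^ (p ^ r) * c).support, μ 0 = 0 := by
                intro μ hμ
                have h1 := hγc0 (p ^ r)
                have h2 := monomial_le_degreeOf 0 hμ
                omega
              have happ := hmon (p ^ r) hq1 le_rfl (γ ^ (p ^ r) * c) hhomq hsuppq
                ⟨X 0 ^ (m 0 - p ^ r) * (γ ^ (p ^ r) * c), hwmem _ hqm⟩ ?_
              · rw [hWeq, happ, Nat.sub_self, pow_zero, one_mul, hc_one, mul_one]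
              · show X 0 ^ (m 0 - p ^ r) * (γ ^ (p ^ r) * c)
                  = X 0 ^ (p ^ r * d - p ^ r) * (γ ^ (p ^ r) * c)
                rw [hm0N]
            rw [hLHS3, Finset.sum_pair hq0, hW0, hWq, hR2, hm0N, Nat.choose_zero_right,
              Nat.cast_one, one_smul, aux_choose_qd_q_cast p hp K r d, smul_smul,
              mul_inv_cancel₀ hdK, one_smul]
          · -- Case C : `1 ≤ k ≤ p^r`.
            have hk1 : 1 ≤ k := by omega
            have hψx : ψ ⟨monomial m (1 : K), hh⟩ = (d : K)⁻¹ • (X 0 ^ (p ^ r - k) * b) := by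
              apply hmon k hk1 hkq b hb1 hb0
              show monomial m (1 : K) = X 0 ^ (p ^ r * d - k) * b
              rw [hsplit, hm0]
            have hRHS : ρ g (ψ ⟨monomial m (1 : K), hh⟩)
                = ∑ j ∈ Finset.range (p ^ r - k + 1),
                    (d : K)⁻¹ • (((p ^ r - k).choose j : K)
                      • (X 0 ^ (p ^ r - k - j) * (γ ^ j * c))) := by
              rw [hψx, map_smul, map_mul, map_pow, hγ, hcdef,
                show X 0 + γ = γ + X 0 from add_comm _ _, add_pow, Finset.sum_mul,
                Finset.smul_sum]
              refine Finset.sum_congr rfl fun j hj => ?_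
              congr 1
              rw [cast_smul_eq]
              ring
            have hψW : ∀ j : ℕ, j ≤ p ^ r - k →
                ψ (W j) = (d : K)⁻¹ • (X 0 ^ (p ^ r - k - j) * (γ ^ j * c)) := by
              intro j hj
              have hjm : j ≤ m 0 := by omega
              have hWeq : W j = ⟨X 0 ^ (m 0 - j) * (γ ^ j * c), hwmem j hjm⟩ :=
                Subtype.ext (hWcoe hjm)
              have hhomj : (γ ^ j * c).IsHomogeneous (k + j) := by
                have := (hγ1.pow j).mul hc_hom
                rw [show 1 * j + k = k + j by ring] at this
                exact this
              have hsuppj : ∀ μ ∈ (γ ^ j * c).support, μ 0 = 0 := by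
                intro μ hμ
                have h1 := hγc0 j
                have h2 := monomial_le_degreeOf 0 hμ
                omega
              have happ := hmon (k + j) (by omega) (by omega) (γ ^ j * c) hhomj hsuppj
                ⟨X 0 ^ (m 0 - j) * (γ ^ j * c), hwmem j hjm⟩ ?_
              · rw [hWeq, happ, Nat.sub_add_eq]
              · show X 0 ^ (m 0 - j) * (γ ^ j * c) = X 0 ^ (p ^ r * d - (k + j)) * (γ ^ j * c)
                rw [show m 0 - j = p ^ r * d - (k + j) by omega]
            rw [hLHS2, hRHS]
            refine Finset.sum_congr rfl fun j hj => ?_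
            rw [Finset.mem_range] at hj
            have hj' : j ≤ p ^ r - k := by omega
            rw [hψW j hj', hm0, aux_choose_sub_cast p hp K r d k j hd hk1 hkq hj']
            exact smul_comm _ _ _
  have hf'eq : f' = ⟨ρ g (f : MvPolynomial (Fin (n + 1)) K), hgrade g _ _ f.2⟩ :=
    Subtype.ext hf'
  rw [hf'eq]
  exact main (f : MvPolynomial (Fin (n + 1)) K) (aux_homog_mem_span _ _ f.2) f.2
    (hgrade g _ _ f.2)
end
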